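/- If the graph Δ_t(n,k−1) is nonempty and not connected, then the graph Λ̃_t(n,k) (the subgraph of Λ_t(n,k) induced on the non-isolated codes) is not connected. -/

import Mathlib

open Finset

variable (F : Type) [Field F] [Fintype F] [DecidableEq F]

/-- The dual code of a linear code `C ⊆ F^n`, with respect to the standard bilinear form. -/
def dualCode (n : ℕ) (C : Submodule F (Fin n → F)) : Submodule F (Fin n → F) where
  carrier := {v | ∀ c ∈ C, ∑ i, v i * c i = 0}
  zero_mem' := by intro c _; simp
  add_mem' := by
    intro a b ha hb c hc
    simp only [Set.mem_setOf_eq] at *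
    simp [add_mul, Finset.sum_add_distrib, ha c hc, hb c hc]
  smul_mem' := by
    intro r a ha c hc
    simp only [Set.mem_setOf_eq] at *
    simp [smul_eq_mul, mul_assoc, ← Finset.mul_sum, ha c hc]

/-- `goodCode F n t k C` says that `C` is an `[n,k]`-linear code over `F` whose dual minimum
distance is at least `t+1`, i.e. `C ∈ C_t(n,k)`. -/
def goodCode (n t k : ℕ) (C : Submodule F (Fin n → F)) : Prop :=
  Module.finrank F C = k ∧ ∀ v ∈ dualCode F n C, v ≠ 0 → t + 1 ≤ hammingNorm v

/-- The Grassmann graph `Δ_t(n,k)` of codes in `C_t(n,k)`: two codes are adjacent iff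
their intersection has dimension `k-1`. -/
def deltaGraph (n t k : ℕ) : SimpleGraph {C : Submodule F (Fin n → F) // goodCode F n t k C} where
  Adj X Y := X ≠ Y ∧ Module.finrank F ↥(X.1 ⊓ Y.1) = k - 1
  symm := by
    constructor
    rintro X Y ⟨h1, h2⟩
    exact ⟨h1.symm, by rwa [inf_comm]⟩
  loopless := by constructor; rintro X ⟨h1, _⟩; exact h1 rfl

/-- The graph `Λ_t(n,k)` of codes in `C_t(n,k)`: two codes are adjacent iff
their intersection belongs to `C_t(n,k-1)`. -/
def lambdaGraph (n t k : ℕ) : SimpleGraph {C : Submodule F (Fin n → F) // goodCode F n t k C} where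
  Adj X Y := X ≠ Y ∧ goodCode F n t (k-1) (X.1 ⊓ Y.1)
  symm := by
    constructor
    rintro X Y ⟨h1, h2⟩
    exact ⟨h1.symm, by rwa [inf_comm]⟩
  loopless := by constructor; rintro X ⟨h1, _⟩; exact h1 rfl

/-- A code `C ∈ C_t(n,k)` is isolated if no `(k-1)`-dimensional subspace of `C`
belongs to `C_t(n,k-1)`. -/
def IsIsolated (n t k : ℕ) (C : Submodule F (Fin n → F)) : Prop :=
  ∀ D : Submodule F (Fin n → F), D ≤ C → ¬ goodCode F n t (k-1) D

/-- A monomial transformation of `F^n`: a permutation of the coordinates composed with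
multiplication of each coordinate by a nonzero scalar. -/
def IsMonomial (n : ℕ) (ρ : (Fin n → F) ≃ₗ[F] (Fin n → F)) : Prop :=
  ∃ (σ : Equiv.Perm (Fin n)) (d : Fin n → F),
    (∀ i, d i ≠ 0) ∧ ∀ (v : Fin n → F) (i : Fin n), ρ v i = d i * v (σ i)

/-- `S_s(Ω)`: the set of points (`1`-dimensional subspaces) of `PG(k-1,q)` lying on a subspace
spanned by `s+1` points of `Ω`. (We represent any subspace by the corresponding submodule of
`F^k`, and points of `PG(k-1,q)` by `1`-dimensional submodules.) -/
def satPoints (k s : ℕ) (Ω : Set (Submodule F (Fin k → F))) : Set (Submodule F (Fin k → F)) :=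
  {P | ∃ T : Finset (Submodule F (Fin k → F)), ↑T ⊆ Ω ∧ T.card = s + 1 ∧ P ≤ T.sup id}

/-- A set `Ω` of points of `PG(k-1,q)` is `s`-saturating if `S_s(Ω)` is the whole point set of
`PG(k-1,q)` while (for `s ≥ 1`) `S_{s-1}(Ω)` is not. -/
def IsSaturating (k s : ℕ) (Ω : Set (Submodule F (Fin k → F))) : Prop :=
  (∀ P : Submodule F (Fin k → F), Module.finrank F P = 1 → P ∈ satPoints F k s Ω) ∧
  (1 ≤ s → ¬ ∀ P : Submodule F (Fin k → F), Module.finrank F P = 1 → P ∈ satPoints F k (s-1) Ω)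

/-! If the codes `X₀, X₁, …, X_m` form a walk in `Λ̃_t(n,k)`, then consecutive intersections
`X_{i-1} ∩ X_i` lie in `C_t(n,k-1)`, and any two good hyperplanes of one `k`-dimensional code are
equal or adjacent in `Δ_t(n,k-1)`; hence good hyperplanes of `X₀` and of `X_m` are joined in
`Δ_t(n,k-1)`. Every code of `C_t(n,k-1)` is such a hyperplane of some code of `C_t(n,k)`, since
enlarging a code shrinks its dual, so a connected `Λ̃_t(n,k)` would make `Δ_t(n,k-1)` connected. -/

theorem Submodule.exists_le_finrank_eq_add_one {K V : Type*} [DivisionRing K] [AddCommGroup V]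
    [Module K V] [Module.Finite K V] {p : Submodule K V}
    (hp : Module.finrank K p < Module.finrank K V) :
    ∃ q : Submodule K V, p ≤ q ∧ Module.finrank K q = Module.finrank K p + 1 := by
  obtain ⟨v, -, hv⟩ := SetLike.exists_of_lt
    (lt_top_iff_ne_top.2 fun h => hp.ne (Submodule.eq_top_iff_finrank_eq.1 h))
  exact ⟨p ⊔ Submodule.span K {v}, le_sup_left, Submodule.finrank_sup_span_singleton hv⟩

theorem Submodule.finrank_inf_add_one_of_hyperplanes {K V : Type*} [DivisionRing K]
    [AddCommGroup V] [Module K V] [Module.Finite K V] {X D D' : Submodule K V}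
    (hDX : D ≤ X) (hD'X : D' ≤ X) (hD : Module.finrank K D + 1 = Module.finrank K X)
    (hD' : Module.finrank K D' + 1 = Module.finrank K X) (hne : D ≠ D') :
    Module.finrank K ↥(D ⊓ D') + 1 = Module.finrank K D := by
  have hlt : D < D ⊔ D' := lt_of_le_of_ne le_sup_left fun h =>
    hne (Submodule.eq_of_le_of_finrank_le (h ▸ le_sup_right : D' ≤ D) (by omega)).symm
  have hsup : Module.finrank K ↥(D ⊔ D') = Module.finrank K X :=
    le_antisymm (Submodule.finrank_mono (sup_le hDX hD'X))
      (by have := Submodule.finrank_lt_finrank_of_lt hlt; omega)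
  have := Submodule.finrank_sup_add_finrank_inf_eq D D'
  omega

section Codes

variable {K : Type} [Field K] {n t k : ℕ}

theorem dualCode_anti {C D : Submodule K (Fin n → K)} (h : C ≤ D) :
    dualCode K n D ≤ dualCode K n C :=
  fun _ hv c hc => hv c (h hc)

variable [DecidableEq K]

theorem goodCode_of_le {k' : ℕ} {D X : Submodule K (Fin n → K)} (hDX : D ≤ X)
    (hD : goodCode K n t k' D) (hX : Module.finrank K X = k) : goodCode K n t k X :=
  ⟨hX, fun v hv hv0 => hD.2 v (dualCode_anti hDX hv) hv0⟩

theorem exists_goodCode_ge (hk : 0 < k) (hkn : k ≤ n) {D : Submodule K (Fin n → K)}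
    (hD : goodCode K n t (k - 1) D) : ∃ X : Submodule K (Fin n → K), D ≤ X ∧ goodCode K n t k X := by
  obtain ⟨X, hDX, hX⟩ := Submodule.exists_le_finrank_eq_add_one (p := D)
    (by rw [hD.1, Module.finrank_fin_fun]; omega)
  exact ⟨X, hDX, goodCode_of_le hDX hD (by rw [hX, hD.1]; omega)⟩

theorem deltaGraph_reachable_of_le (hk : 0 < k) {X D D' : Submodule K (Fin n → K)}
    (hX : Module.finrank K X = k) (hD : goodCode K n t (k - 1) D)
    (hD' : goodCode K n t (k - 1) D') (hDX : D ≤ X) (hD'X : D' ≤ X) :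
    (deltaGraph K n t (k - 1)).Reachable ⟨D, hD⟩ ⟨D', hD'⟩ := by
  rcases eq_or_ne D D' with rfl | hne
  · rfl
  · refine SimpleGraph.Adj.reachable ⟨fun h => hne (congrArg Subtype.val h), ?_⟩
    change Module.finrank K ↥(D ⊓ D') = k - 1 - 1
    have := Submodule.finrank_inf_add_one_of_hyperplanes hDX hD'X
      (by rw [hD.1, hX]; omega) (by rw [hD'.1, hX]; omega) hne
    have := hD.1
    omega

variable (K n t k) in
def lambdaTildeGraph :
    SimpleGraph {X : {C : Submodule K (Fin n → K) // goodCode K n t k C} |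
      ¬ IsIsolated K n t k X.1} :=
  (lambdaGraph K n t k).induce {X | ¬ IsIsolated K n t k X.1}

theorem deltaGraph_reachable_of_lambdaTildeGraph_reachable (hk : 0 < k) {A B}
    (hAB : (lambdaTildeGraph K n t k).Reachable A B) {D D' : Submodule K (Fin n → K)}
    (hD : goodCode K n t (k - 1) D) (hD' : goodCode K n t (k - 1) D')
    (hDA : D ≤ A.1.1) (hD'B : D' ≤ B.1.1) :
    (deltaGraph K n t (k - 1)).Reachable ⟨D, hD⟩ ⟨D', hD'⟩ := by
  obtain ⟨w⟩ := hAB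
  induction w generalizing D with
  | @nil A => exact deltaGraph_reachable_of_le hk A.1.2.1 hD hD' hDA hD'B
  | @cons A C B hAC _ ih =>
    have hinf : goodCode K n t (k - 1) (A.1.1 ⊓ C.1.1) := hAC.2
    exact (deltaGraph_reachable_of_le hk A.1.2.1 hD hinf hDA inf_le_left).trans
      (ih hinf inf_le_right hD'B)

end Codes

theorem lambdaTilde_disconnected_of_delta_disconnected
    {n k t : ℕ} (hk : 0 < k) (hkn : k < n)
    (hdis : ¬ (deltaGraph F n t (k-1)).Preconnected) :
    ¬ ((lambdaGraph F n t k).induce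
        {X : {C : Submodule F (Fin n → F) // goodCode F n t k C} |
          ¬ IsIsolated F n t k X.1}).Preconnected := by
  intro hcon
  refine hdis fun D₁ D₂ => ?_
  obtain ⟨X₁, hDX₁, hX₁⟩ := exists_goodCode_ge hk hkn.le D₁.2
  obtain ⟨X₂, hDX₂, hX₂⟩ := exists_goodCode_ge hk hkn.le D₂.2
  have hreach : (lambdaTildeGraph F n t k).Reachable
      ⟨⟨X₁, hX₁⟩, fun h => h _ hDX₁ D₁.2⟩ ⟨⟨X₂, hX₂⟩, fun h => h _ hDX₂ D₂.2⟩ := hcon _ _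
  exact deltaGraph_reachable_of_lambdaTildeGraph_reachable hk hreach D₁.2 D₂.2 hDX₁ hDX₂
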